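/- For every integer n ≥ 4, the finite sequence k ↦ a_{n,k}, defined for 2 ≤ k ≤ n+1, attains its maximum at some interior index, i.e. there exists an integer k with 2 < k < n+1 such that a_{n,k} ≥ a_{n,j} for all 2 ≤ j ≤ n+1. -/

import Mathlib

/-! The maximum of `a n` over the interior indices `3 ≤ k ≤ n` dominates both endpoints. Write
`S_j(m)` for `nestedSum j m`. At the left end, `a_{n,3} = 2 (n-1)! S_1(n-1)` and
`S_1(n-1) ≥ S_1(1) = 1`. At the right end, the recurrence `S_{j+1}(m+1) = S_{j+1}(m) + S_j(m)/(m+1)`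
gives `S_m(m) = 1/m!` and `S_m(m+1) = (m+2)/(2 m!)`, whence `a_{n,n+1} = n!` and
`a_{n,n} = n! (n-1)/2`. -/

/-- `nestedSum j m` is the `j`-fold nested sum
`Σ_{ℓ1=1}^{m} (1/ℓ1) Σ_{ℓ2=1}^{ℓ1-1} (1/ℓ2) ⋯ Σ_{ℓj=1}^{ℓ_{j-1}-1} (1/ℓj)`,
with the empty (`j = 0`) nested sum equal to `1`. -/
noncomputable def nestedSum : ℕ → ℕ → ℝ
  | 0, _ => 1
  | j + 1, m => ∑ l ∈ Finset.Icc 1 m, (1 / (l : ℝ)) * nestedSum j (l - 1)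
termination_by j _ => j

/-- The quantity `a_{n,k} = (k-1)!(n-1)!` times the `(k-2)`-fold nested sum
`Σ_{ℓ1=1}^{n-1} (1/ℓ1) ⋯ Σ_{ℓ_{k-2}=1}^{ℓ_{k-3}-1} (1/ℓ_{k-2})`; in particular
`a_{n,2} = (n-1)!`. -/
noncomputable def a (n k : ℕ) : ℝ :=
  (Nat.factorial (k - 1) : ℝ) * (Nat.factorial (n - 1) : ℝ) * nestedSum (k - 2) (n - 1)

open Nat

@[simp]
lemma nestedSum_zero (m : ℕ) : nestedSum 0 m = 1 := by
  rw [nestedSum]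

lemma nestedSum_succ (j m : ℕ) :
    nestedSum (j + 1) m = ∑ l ∈ Finset.Icc 1 m, (1 / (l : ℝ)) * nestedSum j (l - 1) := by
  rw [nestedSum]

lemma nestedSum_succ_zero (j : ℕ) : nestedSum (j + 1) 0 = 0 := by
  rw [nestedSum_succ, Finset.Icc_eq_empty (by omega), Finset.sum_empty]

lemma nestedSum_succ_succ (j m : ℕ) :
    nestedSum (j + 1) (m + 1) = nestedSum (j + 1) m + nestedSum j m / (m + 1) := by
  rw [nestedSum_succ, nestedSum_succ, Finset.sum_Icc_succ_top (by omega)]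
  push_cast
  ring

lemma nestedSum_nonneg (j m : ℕ) : 0 ≤ nestedSum j m := by
  induction j generalizing m with
  | zero => simp
  | succ j ih =>
    rw [nestedSum_succ]
    exact Finset.sum_nonneg fun l _ => mul_nonneg (by positivity) (ih _)

lemma nestedSum_monotone (j : ℕ) : Monotone (nestedSum j) := by
  refine monotone_nat_of_le_succ fun m => ?_
  cases j with
  | zero => simp
  | succ j =>
    rw [nestedSum_succ_succ]
    exact le_add_of_nonneg_right (div_nonneg (nestedSum_nonneg j m) (by positivity))

lemma nestedSum_eq_zero_of_lt {j m : ℕ} (h : m < j) : nestedSum j m = 0 := by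
  induction m generalizing j with
  | zero =>
    obtain ⟨j, rfl⟩ := Nat.exists_eq_succ_of_ne_zero h.ne'
    exact nestedSum_succ_zero j
  | succ m ih =>
    obtain ⟨j, rfl⟩ := Nat.exists_eq_succ_of_ne_zero (by omega : j ≠ 0)
    rw [nestedSum_succ_succ, ih (by omega), ih (by omega)]
    simp

lemma nestedSum_self (m : ℕ) : nestedSum m m = ((m ! : ℕ) : ℝ)⁻¹ := by
  induction m with
  | zero => simp
  | succ m ih =>
    rw [nestedSum_succ_succ, nestedSum_eq_zero_of_lt m.lt_succ_self, zero_add, ih, factorial_succ]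
    push_cast
    field_simp

lemma nestedSum_succ_self (m : ℕ) : nestedSum m (m + 1) = ((m : ℝ) + 2) / (2 * (m ! : ℕ)) := by
  induction m with
  | zero => simp
  | succ m ih =>
    rw [nestedSum_succ_succ, nestedSum_self, ih, factorial_succ]
    push_cast
    field_simp
    ring

lemma a_two (n : ℕ) : a n 2 = ((n - 1)! : ℕ) := by
  simp [a]

lemma a_three (n : ℕ) : a n 3 = 2 * ((n - 1)! : ℕ) * nestedSum 1 (n - 1) := by
  simp [a]

lemma a_succ_self (n : ℕ) (hn : 1 ≤ n) : a n (n + 1) = (n ! : ℕ) := by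
  obtain ⟨m, rfl⟩ := Nat.exists_eq_add_of_le' hn
  simp only [a, Nat.add_sub_cancel, show m + 1 + 1 - 2 = m by omega, nestedSum_self]
  field_simp

lemma a_self (n : ℕ) (hn : 2 ≤ n) : a n n = (n ! : ℕ) * ((n : ℝ) - 1) / 2 := by
  obtain ⟨m, rfl⟩ := Nat.exists_eq_add_of_le' hn
  simp only [a, show m + 2 - 1 = m + 1 by omega, Nat.add_sub_cancel, nestedSum_succ_self,
    factorial_succ]
  push_cast
  field_simp
  ring

lemma a_two_le_a_three (n : ℕ) (hn : 2 ≤ n) : a n 2 ≤ a n 3 := by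
  have h_harmonic : 1 ≤ nestedSum 1 (n - 1) := by
    simpa [nestedSum_self] using nestedSum_monotone 1 (show 1 ≤ n - 1 by omega)
  rw [a_two, a_three]
  have : (0 : ℝ) ≤ ((n - 1)! : ℕ) := by positivity
  nlinarith

lemma a_succ_self_le_a_self (n : ℕ) (hn : 3 ≤ n) : a n (n + 1) ≤ a n n := by
  rw [a_succ_self n (by omega), a_self n (by omega)]
  have : (3 : ℝ) ≤ n := by exact_mod_cast hn
  have : (0 : ℝ) ≤ (n ! : ℕ) := by positivity
  nlinarith

/-- For every `n ≥ 4`, the finite sequence `k ↦ a_{n,k}` on `2 ≤ k ≤ n+1` attains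
its maximum at some interior index `2 < k < n+1`. -/
theorem a_max_interior (n : ℕ) (hn : 4 ≤ n) :
    ∃ k : ℕ, 2 < k ∧ k < n + 1 ∧ ∀ j : ℕ, 2 ≤ j → j ≤ n + 1 → a n j ≤ a n k := by
  obtain ⟨k, hk, hmax⟩ := Finset.exists_max_image (Finset.Icc 3 n) (a n)
    ⟨3, Finset.mem_Icc.2 ⟨le_rfl, by omega⟩⟩
  rw [Finset.mem_Icc] at hk
  refine ⟨k, by omega, by omega, fun j hj2 hjn => ?_⟩
  obtain rfl | hj3 := hj2.eq_or_lt
  · exact (a_two_le_a_three n (by omega)).trans (hmax 3 (Finset.mem_Icc.2 ⟨le_rfl, by omega⟩))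
  obtain rfl | hjn := hjn.eq_or_lt
  · exact (a_succ_self_le_a_self n (by omega)).trans (hmax n (Finset.mem_Icc.2 ⟨by omega, le_rfl⟩))
  exact hmax j (Finset.mem_Icc.2 ⟨hj3, by omega⟩)
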